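/- Suppose K ≠ ℚ(i). For M ∈ SL₂(O_K), the Möbius image M(ℝ̂) equals ℝ̂ = ℝ ∪ {∞} (as subsets of ℂ ∪ {∞}) if and only if all four entries of M are rational integers, i.e. M ∈ SL₂(ℤ). -/

import Mathlib

/-!
If `M(ℝ̂) = ℝ̂`, the rational function `x ↦ M x` is real on `ℝ` away from its pole, which forces
the conjugate matrix `M̄` to be `±M`: the entries of `M` are either all real or all purely
imaginary. As `K` is imaginary quadratic, real elements of `O_K` are rational integers, while the
purely imaginary ones form a ℤ-module of rank one, `ℤ z`. In the second case `det M = 1` makes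
`z ^ 2` a unit of `ℤ`, necessarily `-1`, so `i ∈ K`. Conversely, a real matrix of determinant one
preserves `ℝ̂`.
-/

open Complex ComplexConjugate NumberField OnePoint

/-- The finite part of the Möbius image of the extended real line `ℝ̂` under the matrix
`[[α,γ],[β,δ]]`: the set `{(αx+γ)/(βx+δ) : x ∈ ℝ, βx+δ ≠ 0} ∪ {α/β if β ≠ 0}`. -/
def mobiusFin (α β γ δ : ℂ) : Set ℂ :=
  {z | (∃ x : ℝ, β * (x : ℂ) + δ ≠ 0 ∧ z = (α * x + γ) / (β * x + δ)) ∨ (β ≠ 0 ∧ z = α / β)}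

/-- The Möbius image of `ℝ̂ = ℝ ∪ {∞}` in `ℂ ∪ {∞}` under the matrix `[[α,γ],[β,δ]]`;
`∞` belongs to it iff `β = 0` or `δ/β ∈ ℝ`. -/
def mobius (α β γ δ : ℂ) : Set (OnePoint ℂ) :=
  {w | (∃ z ∈ mobiusFin α β γ δ, w = (z : OnePoint ℂ)) ∨
       ((β = 0 ∨ ∃ x : ℝ, δ = β * (x : ℂ)) ∧ w = ∞)}

/-- The extended real line `ℝ̂ = ℝ ∪ {∞}` as a subset of `ℂ ∪ {∞}`. -/
def rhat : Set (OnePoint ℂ) :=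
  {w | (∃ x : ℝ, w = ((x : ℂ) : OnePoint ℂ)) ∨ w = ∞}

/-- The embedding of the ring of integers of `K` into `ℂ` induced by `ι : K →+* ℂ`. -/
noncomputable def emb (K : Type) [Field K] [NumberField K] (ι : K →+* ℂ)
    (x : RingOfIntegers K) : ℂ := ι (algebraMap (RingOfIntegers K) K x)

/-- The `K`-Bianchi circle attached to `M ∈ SL₂(O_K)`: the Möbius image `M(ℝ̂) ⊆ ℂ ∪ {∞}`. -/
noncomputable def bianchiCircle (K : Type) [Field K] [NumberField K] (ι : K →+* ℂ)
    (M : Matrix.SpecialLinearGroup (Fin 2) (RingOfIntegers K)) : Set (OnePoint ℂ) :=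
  mobius (emb K ι (M.1 0 0)) (emb K ι (M.1 1 0)) (emb K ι (M.1 0 1)) (emb K ι (M.1 1 1))

open Module InfinitePlace

section Mobius

lemma ofReal_mem_mobiusFin {a b c d : ℝ} (hdet : a * d - c * b = 1) (x : ℝ) :
    (x : ℂ) ∈ mobiusFin a b c d := by
  by_cases hx : a - b * x = 0
  · have hb : b ≠ 0 := by
      rintro rfl
      simp_all
    refine Or.inr ⟨mod_cast hb, ?_⟩
    rw [eq_div_iff (mod_cast hb)]
    exact_mod_cast (by linarith : x * b = a)
  · -- the preimage `(d x - c) / (a - b x)` of `x` comes from the inverse matrix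
    have hden : b * ((d * x - c) / (a - b * x)) + d = 1 / (a - b * x) := by
      rw [eq_div_iff hx, add_mul, mul_assoc, div_mul_cancel₀ _ hx]
      linear_combination hdet
    have hnum : a * ((d * x - c) / (a - b * x)) + c = x / (a - b * x) := by
      rw [eq_div_iff hx, add_mul, mul_assoc, div_mul_cancel₀ _ hx]
      linear_combination x * hdet
    have hden0 : b * ((d * x - c) / (a - b * x)) + d ≠ 0 := by simp [hden, hx]
    refine Or.inl ⟨(d * x - c) / (a - b * x), mod_cast hden0, ?_⟩
    rw [eq_div_iff (mod_cast hden0)]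
    exact_mod_cast (by rw [hnum, hden]; ring)

lemma mobius_ofReal_eq_rhat {a b c d : ℝ} (hdet : a * d - c * b = 1) :
    mobius a b c d = rhat := by
  ext w
  constructor
  · rintro (⟨z, ⟨x, -, rfl⟩ | ⟨-, rfl⟩, rfl⟩ | ⟨-, rfl⟩)
    · exact Or.inl ⟨(a * x + c) / (b * x + d), by norm_cast⟩
    · exact Or.inl ⟨a / b, by norm_cast⟩
    · exact Or.inr rfl
  · rintro (⟨x, rfl⟩ | rfl)
    · exact Or.inl ⟨x, ofReal_mem_mobiusFin hdet x, rfl⟩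
    · refine Or.inr ⟨?_, rfl⟩
      by_cases hb : b = 0
      · exact Or.inl (mod_cast hb)
      · exact Or.inr ⟨d / b, mod_cast (mul_div_cancel₀ d hb).symm⟩

variable {α β γ δ : ℂ}

lemma conj_mobius_eq_of_mobius_eq_rhat (h : mobius α β γ δ = rhat) {x : ℝ}
    (hx : β * x + δ ≠ 0) :
    (conj α * x + conj γ) / (conj β * x + conj δ) = (α * x + γ) / (β * x + δ) := by
  have hmem : (((α * x + γ) / (β * x + δ) : ℂ) : OnePoint ℂ) ∈ rhat :=
    h ▸ Or.inl ⟨_, Or.inl ⟨x, hx, rfl⟩, rfl⟩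
  obtain ⟨r, hr⟩ | hr := hmem
  · rw [OnePoint.coe_eq_coe.mp hr]
    simpa using congrArg conj (OnePoint.coe_eq_coe.mp hr)
  · exact absurd hr (OnePoint.coe_ne_infty _)

lemma mul_conj_eq_conj_mul_of_mobius_eq_rhat (hdet : α * δ - γ * β = 1)
    (h : mobius α β γ δ = rhat) (x : ℝ) :
    (α * x + γ) * (conj β * x + conj δ) = (conj α * x + conj γ) * (β * x + δ) := by
  -- the identity holds off the (at most one) pole of the Möbius map, hence everywhere by continuity
  have hpole : {x : ℝ | β * x + δ = 0}.Subsingleton := by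
    intro x hx y hy
    have hβ : β ≠ 0 := by
      rintro rfl
      simp_all
    have hxy : (x : ℂ) = y := mul_left_cancel₀ hβ (by linear_combination hx.out - hy.out)
    exact_mod_cast hxy
  have hoff : ∀ y : ℝ, β * y + δ ≠ 0 →
      (α * y + γ) * (conj β * y + conj δ) = (conj α * y + conj γ) * (β * y + δ) := by
    intro y hy
    have hy' : conj β * y + conj δ ≠ 0 := by
      simpa using (map_ne_zero (starRingEnd ℂ)).mpr hy
    have := conj_mobius_eq_of_mobius_eq_rhat h hy
    rw [div_eq_div_iff hy' hy] at this
    linear_combination -this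
  exact congrFun (Continuous.ext_on (hpole.countable.dense_compl ℝ) (by fun_prop) (by fun_prop)
    hoff) x

lemma conj_eq_or_conj_eq_neg_of_det (hdet : α * δ - γ * β = 1)
    (h0 : γ * conj δ = conj γ * δ) (h1 : α * conj β = conj α * β)
    (h2 : α * conj δ + γ * conj β = conj α * δ + conj γ * β) :
    (conj α = α ∧ conj β = β ∧ conj γ = γ ∧ conj δ = δ) ∨
    (conj α = -α ∧ conj β = -β ∧ conj γ = -γ ∧ conj δ = -δ) := by
  have hdet' : conj α * conj δ - conj γ * conj β = 1 := by simpa using congrArg conj hdet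
  -- the matrix equals `t` times its conjugate, and taking determinants gives `t ^ 2 = 1`
  set t := α * conj δ - β * conj γ
  have hα : α = t * conj α := by linear_combination -(conj γ) * h1 - α * hdet'
  have hβ : β = t * conj β := by linear_combination -(conj δ) * h1 - β * hdet'
  have hγ : γ = t * conj γ := by linear_combination conj α * h0 - γ * hdet' - conj γ * h2
  have hδ : δ = t * conj δ := by linear_combination conj β * h0 - δ * hdet' - conj δ * h2
  have ht : t * t = 1 := by
    linear_combination hdet - t * t * hdet' - t * conj δ * hα - α * hδ + t * conj β * hγ + γ * hβ
  rcases mul_self_eq_one_iff.mp ht with ht | ht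
  all_goals rw [ht] at hα hβ hγ hδ
  · left
    exact ⟨by linear_combination -hα, by linear_combination -hβ, by linear_combination -hγ,
      by linear_combination -hδ⟩
  · right
    exact ⟨by linear_combination hα, by linear_combination hβ, by linear_combination hγ,
      by linear_combination hδ⟩

lemma conj_eq_or_conj_eq_neg_of_mobius_eq_rhat (hdet : α * δ - γ * β = 1)
    (h : mobius α β γ δ = rhat) :
    (conj α = α ∧ conj β = β ∧ conj γ = γ ∧ conj δ = δ) ∨
    (conj α = -α ∧ conj β = -β ∧ conj γ = -γ ∧ conj δ = -δ) := by
  have e0 := mul_conj_eq_conj_mul_of_mobius_eq_rhat hdet h 0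
  have e1 := mul_conj_eq_conj_mul_of_mobius_eq_rhat hdet h 1
  have e2 := mul_conj_eq_conj_mul_of_mobius_eq_rhat hdet h (-1)
  push_cast at e0 e1 e2
  exact conj_eq_or_conj_eq_neg_of_det hdet (by linear_combination e0)
    (by linear_combination (e1 + e2) / 2 - e0) (by linear_combination (e1 - e2) / 2)

end Mobius

section ImaginaryQuadratic

lemma isTotallyComplex_of_finrank_eq_two_of_discr_neg {K : Type*} [Field K] [NumberField K]
    (hdeg : finrank ℚ K = 2) (hdisc : discr K < 0) : IsTotallyComplex K := by
  have hodd : Odd (nrComplexPlaces K) := by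
    have h := sign_discr K
    rw [Int.sign_eq_neg_one_of_neg hdisc] at h
    exact (neg_one_pow_eq_neg_one_iff_odd (by norm_num)).mp h.symm
  rw [← nrRealPlaces_eq_zero_iff]
  have := card_add_two_mul_card_eq_rank K
  obtain ⟨k, hk⟩ := hodd
  omega

variable {K : Type*} [Field K] {ι : K →+* ℂ}

lemma exists_ratCast_eq_of_conj_eq [CharZero K] (hdeg : finrank ℚ K = 2)
    (hι : ¬ ComplexEmbedding.IsReal ι) {z : K} (hz : conj (ι z) = ι z) :
    ∃ q : ℚ, (q : K) = z := by
  by_contra! hzq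
  have hli : LinearIndependent ℚ ![(1 : K), z] := by
    rw [LinearIndependent.pair_iff' one_ne_zero]
    intro q hq
    exact hzq q (by rw [← hq, Rat.smul_def, mul_one])
  have hspan := hli.span_eq_top_of_card_eq_finrank (by simp [hdeg])
  apply hι
  rw [ComplexEmbedding.isReal_iff]
  ext y
  have hy : y ∈ Submodule.span ℚ (Set.range ![1, z]) := hspan ▸ Submodule.mem_top
  rw [Matrix.range_cons, Matrix.range_cons, Matrix.range_empty, Set.union_empty,
    Set.singleton_union, Submodule.mem_span_pair] at hy
  obtain ⟨a, b, rfl⟩ := hy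
  simp [Rat.smul_def, hz]

lemma exists_intCast_eq_of_conj_eq [CharZero K] (hdeg : finrank ℚ K = 2)
    (hι : ¬ ComplexEmbedding.IsReal ι) {x : 𝓞 K} (hx : conj (ι x) = ι x) :
    ∃ n : ℤ, (n : 𝓞 K) = x := by
  obtain ⟨q, hq⟩ := exists_ratCast_eq_of_conj_eq hdeg hι hx
  have hint : IsIntegral ℤ q := by
    have := RingOfIntegers.isIntegral_coe x
    rw [← RingOfIntegers.coe_eq_algebraMap, ← hq, ← eq_ratCast (algebraMap ℚ K)] at this
    exact (isIntegral_algebraMap_iff (algebraMap ℚ K).injective).mp this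
  obtain ⟨n, rfl⟩ := IsIntegrallyClosed.isIntegral_iff.mp hint
  exact ⟨n, RingOfIntegers.ext (by simpa using hq)⟩

variable (ι) in
def imagSubmodule : Submodule ℤ (𝓞 K) where
  carrier := {x | conj (ι x) = -ι x}
  add_mem' {x y} (hx : conj (ι x) = -ι x) (hy : conj (ι y) = -ι y) := by
    simp only [Set.mem_ofPred, map_add, hx, hy, neg_add]
  zero_mem' := by simp
  smul_mem' n x (hx : conj (ι x) = -ι x) := by
    simp only [Set.mem_ofPred, map_zsmul, hx, zsmul_neg]

lemma mem_imagSubmodule {x : 𝓞 K} : x ∈ imagSubmodule ι ↔ conj (ι x) = -ι x := Iff.rfl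

variable [NumberField K]

lemma imagSubmodule_isPrincipal (hdeg : finrank ℚ K = 2) (hι : ¬ ComplexEmbedding.IsReal ι) :
    (imagSubmodule ι).IsPrincipal := by
  rw [← Submodule.rank_le_one_iff_isPrincipal]
  by_contra! h
  obtain ⟨x, hx⟩ := rank_pos_iff_exists_ne_zero.mp (zero_lt_one.trans h)
  obtain ⟨y, hxy⟩ := exists_linearIndependent_pair_of_one_lt_rank h hx
  have hx0 : ((x : 𝓞 K) : K) ≠ 0 := by simpa using hx
  -- the quotient of two purely imaginary numbers is real, hence rational
  obtain ⟨q, hq⟩ := exists_ratCast_eq_of_conj_eq hdeg hι (z := (y : 𝓞 K) / (x : 𝓞 K))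
    (by rw [map_div₀, map_div₀, mem_imagSubmodule.mp y.2, mem_imagSubmodule.mp x.2,
      neg_div_neg_eq])
  have hrel : (-q.num) • x + (q.den : ℤ) • y = 0 := by
    have hden : (q : K) * q.den = q.num := by
      exact_mod_cast congrArg (Rat.cast (K := K)) q.mul_den_eq_num
    rw [eq_div_iff hx0] at hq
    apply Subtype.ext
    apply RingOfIntegers.ext
    simp only [Submodule.coe_add, Submodule.coe_smul, Submodule.coe_zero, map_add, map_zero,
      zsmul_eq_mul, map_mul, map_intCast]
    push_cast
    linear_combination (-(q.den : K)) * hq + ((x : 𝓞 K) : K) * hden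
  exact q.den_ne_zero (by exact_mod_cast (LinearIndependent.pair_iff.mp hxy _ _ hrel).2)

lemma exists_eq_I_of_mem_imagSubmodule (hdeg : finrank ℚ K = 2)
    (hι : ¬ ComplexEmbedding.IsReal ι) {a b c d : 𝓞 K} (ha : a ∈ imagSubmodule ι)
    (hb : b ∈ imagSubmodule ι) (hc : c ∈ imagSubmodule ι) (hd : d ∈ imagSubmodule ι)
    (hdet : a * d - b * c = 1) : ∃ x : K, ι x = I := by
  obtain ⟨z, hz⟩ := (imagSubmodule_isPrincipal hdeg hι).principal
  have hzmem : z ∈ imagSubmodule ι := hz ▸ Submodule.mem_span_singleton_self z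
  have hmul : ∀ v ∈ imagSubmodule ι, ∃ k : ℤ, k • z = v := fun v hv =>
    Submodule.mem_span_singleton.mp (hz ▸ hv)
  obtain ⟨ka, rfl⟩ := hmul a ha
  obtain ⟨kb, rfl⟩ := hmul b hb
  obtain ⟨kc, rfl⟩ := hmul c hc
  obtain ⟨kd, rfl⟩ := hmul d hd
  obtain ⟨n, hn⟩ := exists_intCast_eq_of_conj_eq hdeg hι (x := z * z) (by
    simp only [map_mul, mem_imagSubmodule.mp hzmem, neg_mul_neg])
  have hunit : (ka * kd - kb * kc) * n = 1 := by
    have : (((ka * kd - kb * kc) * n : ℤ) : 𝓞 K) = 1 := by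
      rw [← hdet, Int.cast_mul, hn]
      simp only [zsmul_eq_mul]
      push_cast
      ring
    exact_mod_cast this
  have hsq : ι z * ι z = n := by
    rw [← map_mul, ← map_mul, ← hn, map_intCast, map_intCast]
  rcases Int.isUnit_iff.mp (IsUnit.of_mul_eq_one_right _ hunit) with rfl | rfl
  · -- a purely imaginary square root of `1` would vanish
    rcases mul_self_eq_one_iff.mp (by exact_mod_cast hsq) with h | h <;>
      · have := mem_imagSubmodule.mp hzmem
        rw [h] at this
        norm_num at this
  · have : (ι z - I) * (ι z + I) = 0 := by
      push_cast at hsq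
      linear_combination hsq - I_mul_I
    rcases mul_eq_zero.mp this with h | h
    · exact ⟨z, by linear_combination h⟩
    · exact ⟨-z, by rw [map_neg]; linear_combination -h⟩

end ImaginaryQuadratic

/-- If `K ≠ ℚ(i)` (i.e. `i` is not in the image of `K` in `ℂ`), then for
`M ∈ SL₂(O_K)` the Möbius image `M(ℝ̂)` equals `ℝ̂` iff all four entries of `M` are
rational integers, i.e. `M ∈ SL₂(ℤ)`. -/
theorem stmt2 (K : Type) [Field K] [NumberField K]
    (hdeg : Module.finrank ℚ K = 2) (hdisc : NumberField.discr K < 0)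
    (ι : K →+* ℂ) (hKi : ∀ x : K, ι x ≠ Complex.I)
    (M : Matrix.SpecialLinearGroup (Fin 2) (RingOfIntegers K)) :
    bianchiCircle K ι M = rhat ↔ ∀ i j : Fin 2, ∃ n : ℤ, emb K ι (M.1 i j) = (n : ℂ) := by
  have := isTotallyComplex_of_finrank_eq_two_of_discr_neg hdeg hdisc
  have hι := IsTotallyComplex.complexEmbedding_not_isReal ι
  have hdet : M.1 0 0 * M.1 1 1 - M.1 0 1 * M.1 1 0 = 1 := by
    rw [← Matrix.det_fin_two, M.2]
  have hdetC :
      emb K ι (M.1 0 0) * emb K ι (M.1 1 1) - emb K ι (M.1 0 1) * emb K ι (M.1 1 0) = 1 := by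
    simpa [emb] using congrArg (fun x : 𝓞 K => emb K ι x) hdet
  constructor
  · intro h
    rcases conj_eq_or_conj_eq_neg_of_mobius_eq_rhat hdetC h with
      ⟨h00, h10, h01, h11⟩ | ⟨h00, h10, h01, h11⟩
    · have hint (x : 𝓞 K) (hx : conj (emb K ι x) = emb K ι x) : ∃ n : ℤ, emb K ι x = n := by
        obtain ⟨n, rfl⟩ := exists_intCast_eq_of_conj_eq hdeg hι hx
        exact ⟨n, by simp [emb]⟩
      intro i j
      fin_cases i <;> fin_cases j
      exacts [hint _ h00, hint _ h01, hint _ h10, hint _ h11]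
    · obtain ⟨x, hx⟩ := exists_eq_I_of_mem_imagSubmodule hdeg hι h00 h01 h10 h11 hdet
      exact absurd hx (hKi x)
  · intro h
    choose n hn using h
    have hdetR : (n 0 0 : ℝ) * n 1 1 - n 0 1 * n 1 0 = 1 := by
      rw [hn, hn, hn, hn] at hdetC
      exact_mod_cast hdetC
    have := mobius_ofReal_eq_rhat hdetR
    push_cast at this
    rwa [bianchiCircle, hn, hn, hn, hn]
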